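/- For (v,u) ∈ ℝⁿ × S₀ⁿ with e(v,u) > 0, the number √(2·e(v,u)) is the smallest ρ > 0 such that (v,u) belongs to the convex hull of K_ρ := {(w, w⊗w − (ρ²/n)Iₙ) : |w| = ρ}. -/

import Mathlib

open Matrix
open scoped RealInnerProductSpace

/-!
The convex hull of `K_r` is the set of `(v, u)` with `tr u = 0` and `v ⊗ v - u ≤ (r²/n) I`, which
for symmetric `u` is the sublevel set `e(v, u) ≤ r²/2`; the theorem is read off from this.
The set contains `K_r`, and it is convex because
`a v ⊗ v + b w ⊗ w - (a v + b w) ⊗ (a v + b w) = a b (v - w) ⊗ (v - w)` for `a + b = 1`.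
Conversely, expand `M = (r²/n) I - (v ⊗ v - u) ⪰ 0` spectrally as `∑ mᵢ eᵢ ⊗ eᵢ`. As
`∑ mᵢ = tr M = r² - |v|²`, the point `(v, u)` is a convex combination of the points
`(v, v ⊗ v - (r²/n) I + (r² - |v|²) eᵢ ⊗ eᵢ)`, and each of these is a convex combination of the
two points of `K_r` over the intersections of the line `v + ℝ eᵢ` with the sphere of radius `r`.
-/

noncomputable def lambdaMax {n : ℕ} (w : Matrix (Fin n) (Fin n) ℝ) : ℝ :=
  if h : w.IsHermitian then ⨆ i, h.eigenvalues i else 0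

noncomputable def eFun {n : ℕ} (v : EuclideanSpace ℝ (Fin n))
    (u : Matrix (Fin n) (Fin n) ℝ) : ℝ :=
  (n / 2 : ℝ) * lambdaMax (vecMulVec (fun i => v i) (fun i => v i) - u)

/-- The set `K_ρ` of Euler states of speed `ρ`. -/
def eulerStates (n : ℕ) (r : ℝ) :
    Set (EuclideanSpace ℝ (Fin n) × Matrix (Fin n) (Fin n) ℝ) :=
  {p | ∃ v : EuclideanSpace ℝ (Fin n), ‖v‖ = r ∧
    p = (v, vecMulVec (fun i => v i) (fun i => v i)
            - (r ^ 2 / n) • (1 : Matrix (Fin n) (Fin n) ℝ))}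

open scoped MatrixOrder in
theorem lambdaMax_le_iff_posSemidef {n : ℕ} [NeZero n] {A : Matrix (Fin n) (Fin n) ℝ}
    (hA : A.IsHermitian) {c : ℝ} : lambdaMax A ≤ c ↔ (c • 1 - A).PosSemidef := by
  rw [lambdaMax, dif_pos hA, ciSup_le_iff (Set.finite_range _).bddAbove,
    ← Set.forall_mem_range (p := (· ≤ c)), ← hA.spectrum_real_eq_range_eigenvalues,
    ← le_algebraMap_iff_spectrum_le hA.isSelfAdjoint, Algebra.algebraMap_eq_smul_one,
    Matrix.le_iff]

theorem Matrix.IsHermitian.eq_sum_eigenvalues_smul_vecMulVec {𝕜 ι : Type*} [RCLike 𝕜]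
    [Fintype ι] [DecidableEq ι] {A : Matrix ι ι 𝕜} (hA : A.IsHermitian) :
    A = ∑ i, (hA.eigenvalues i : 𝕜) •
      vecMulVec (hA.eigenvectorBasis i) (star (hA.eigenvectorBasis i)) := by
  conv_lhs => rw [hA.spectral_theorem]
  ext j k
  rw [Unitary.conjStarAlgAut_apply, mul_apply]
  simp only [mul_diagonal, eigenvectorUnitary_apply, Matrix.sum_apply, smul_apply,
    vecMulVec_apply, star_apply, Pi.star_apply, Function.comp_apply, smul_eq_mul]
  exact Finset.sum_congr rfl fun i _ => by ring

theorem EuclideanSpace.dotProduct_self_eq_norm_sq {ι : Type*} [Fintype ι]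
    (v : EuclideanSpace ℝ ι) : (fun i => v i) ⬝ᵥ (fun i => v i) = ‖v‖ ^ 2 := by
  rw [← real_inner_self_eq_norm_sq, EuclideanSpace.inner_eq_star_dotProduct, star_trivial]

theorem norm_add_smul_eq_of_quadratic_eq {E : Type*} [NormedAddCommGroup E]
    [InnerProductSpace ℝ E] {r : ℝ} (hr : 0 ≤ r) {v e : E} (he : ‖e‖ = 1) {s : ℝ}
    (hs : s ^ 2 + 2 * ⟪v, e⟫ * s = r ^ 2 - ‖v‖ ^ 2) : ‖v + s • e‖ = r := by
  refine (sq_eq_sq₀ (norm_nonneg _) hr).1 ?_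
  rw [norm_add_sq_real, inner_smul_right, norm_smul, he, Real.norm_eq_abs, mul_one, sq_abs]
  linarith

section EulerHull

variable {n : ℕ}

-- Positive semidefiniteness encodes `λ_max (v ⊗ v - u) ≤ r²/n` and the symmetry of `u`.
def eulerHull (n : ℕ) (r : ℝ) : Set (EuclideanSpace ℝ (Fin n) × Matrix (Fin n) (Fin n) ℝ) :=
  {p | p.2.trace = 0 ∧
    ((r ^ 2 / n) • 1 - (vecMulVec (fun i => p.1 i) (fun i => p.1 i) - p.2)).PosSemidef}

theorem eulerStates_subset_eulerHull [NeZero n] (r : ℝ) : eulerStates n r ⊆ eulerHull n r := by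
  rintro _ ⟨w, hw, rfl⟩
  refine ⟨?_, by simpa using PosSemidef.zero⟩
  rw [trace_sub, trace_smul, trace_one, trace_vecMulVec,
    EuclideanSpace.dotProduct_self_eq_norm_sq, hw, Fintype.card_fin, smul_eq_mul,
    div_mul_cancel₀ _ (NeZero.ne (n : ℝ)), sub_self]

theorem convex_eulerHull (n : ℕ) (r : ℝ) : Convex ℝ (eulerHull n r) := by
  rintro ⟨v, u⟩ ⟨htr, hM⟩ ⟨w, u'⟩ ⟨htr', hM'⟩ a b ha hb hab
  refine ⟨by simp [trace_add, trace_smul, htr, htr'], ?_⟩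
  have hdecomp : (r ^ 2 / n) • 1 - (vecMulVec (fun i => (a • v + b • w) i)
        (fun i => (a • v + b • w) i) - (a • u + b • u')) =
      a • ((r ^ 2 / n) • 1 - (vecMulVec (fun i => v i) (fun i => v i) - u)) +
      b • ((r ^ 2 / n) • 1 - (vecMulVec (fun i => w i) (fun i => w i) - u')) +
      (a * b) • vecMulVec (fun i => (v - w) i) (star fun i => (v - w) i) := by
    ext i j
    simp only [Matrix.sub_apply, Matrix.add_apply, Matrix.smul_apply, vecMulVec_apply,
      PiLp.add_apply, PiLp.sub_apply, PiLp.smul_apply, star_trivial, smul_eq_mul]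
    linear_combination -(r ^ 2 / n * (1 : Matrix (Fin n) (Fin n) ℝ) i j
      + a * v i * v j + b * w i * w j) * hab
  simp only [Prod.fst_add, Prod.snd_add, Prod.smul_fst, Prod.smul_snd]
  rw [hdecomp]
  exact ((hM.smul ha).add (hM'.smul hb)).add ((posSemidef_vecMulVec_self_star _).smul
    (mul_nonneg ha hb))

theorem rankOne_mem_convexHull_eulerStates {r : ℝ} {v e : EuclideanSpace ℝ (Fin n)}
    (he : ‖e‖ = 1) (hv : ‖v‖ ≤ r) :
    (v, vecMulVec (fun i => v i) (fun i => v i) - (r ^ 2 / n) • 1 +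
      (r ^ 2 - ‖v‖ ^ 2) • vecMulVec (fun i => e i) (fun i => e i)) ∈
        convexHull ℝ (eulerStates n r) := by
  rcases hv.eq_or_lt with hvr | hvr
  · refine subset_convexHull ℝ _ ⟨v, hvr, ?_⟩
    rw [hvr, sub_self, zero_smul, add_zero]
  set b := ⟪v, e⟫
  set d := √(b ^ 2 + r ^ 2 - ‖v‖ ^ 2)
  have hr : 0 ≤ r := (norm_nonneg v).trans hvr.le
  have hgap : 0 < r ^ 2 - ‖v‖ ^ 2 := by nlinarith [norm_nonneg v]
  have hd2 : d ^ 2 = b ^ 2 + r ^ 2 - ‖v‖ ^ 2 := Real.sq_sqrt (by linarith [sq_nonneg b])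
  have hbd : |b| < d := Real.lt_sqrt_of_sq_lt (by rw [sq_abs]; linarith)
  have hd : 0 < d := (abs_nonneg b).trans_lt hbd
  -- `v + s • e` lies on the sphere for the two roots `s = d - b` and `s = -(b + d)`, and
  -- `v` is their convex combination with weights `(b + d) / 2d` and `(d - b) / 2d`.
  have hp : 0 ≤ (b + d) / (2 * d) := div_nonneg (by linarith [neg_abs_le b]) (by positivity)
  have hq : 0 ≤ (d - b) / (2 * d) := div_nonneg (by linarith [le_abs_self b]) (by positivity)
  have hpq : (b + d) / (2 * d) + (d - b) / (2 * d) = 1 := by field_simp; ring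
  have hmean : (b + d) / (2 * d) * (d - b) + (d - b) / (2 * d) * -(b + d) = 0 := by
    field_simp; ring
  have hvar : (b + d) / (2 * d) * (d - b) ^ 2 + (d - b) / (2 * d) * (-(b + d)) ^ 2 =
      r ^ 2 - ‖v‖ ^ 2 := by
    field_simp
    linear_combination (2 * d) * hd2
  have hmem : ∀ s, s ^ 2 + 2 * b * s = r ^ 2 - ‖v‖ ^ 2 →
      ((v + s • e, vecMulVec (fun i => (v + s • e) i) (fun i => (v + s • e) i) -
        (r ^ 2 / n) • 1) : EuclideanSpace ℝ (Fin n) × Matrix (Fin n) (Fin n) ℝ) ∈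
        convexHull ℝ (eulerStates n r) := fun s hs =>
    subset_convexHull ℝ _ ⟨_, norm_add_smul_eq_of_quadratic_eq hr he hs, rfl⟩
  convert convex_convexHull ℝ _ (hmem (d - b) (by linear_combination hd2))
    (hmem (-(b + d)) (by linear_combination hd2)) hp hq hpq using 1
  ext i j
  · simp only [Prod.fst_add, Prod.smul_fst, PiLp.add_apply, PiLp.smul_apply, smul_eq_mul]
    linear_combination (-v i) * hpq - e i * hmean
  · simp only [Prod.snd_add, Prod.smul_snd, Matrix.sub_apply, Matrix.add_apply,
      Matrix.smul_apply, vecMulVec_apply, PiLp.add_apply, PiLp.smul_apply, smul_eq_mul]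
    linear_combination (-(v i * v j) + r ^ 2 / n * (1 : Matrix (Fin n) (Fin n) ℝ) i j) * hpq
      - (v i * e j + e i * v j) * hmean - e i * e j * hvar

theorem eulerHull_subset_convexHull_eulerStates [NeZero n] {r : ℝ} (hr : 0 ≤ r) :
    eulerHull n r ⊆ convexHull ℝ (eulerStates n r) := by
  rintro ⟨v, u⟩ ⟨htr, hM⟩
  set M := (r ^ 2 / n) • 1 - (vecMulVec (fun i => v i) (fun i => v i) - u) with hM_def
  have hu : u = vecMulVec (fun i => v i) (fun i => v i) - (r ^ 2 / n) • 1 + M := by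
    rw [hM_def]; abel
  have htrM : M.trace = r ^ 2 - ‖v‖ ^ 2 := by
    rw [hM_def, trace_sub, trace_sub, htr, trace_smul, trace_one, trace_vecMulVec,
      EuclideanSpace.dotProduct_self_eq_norm_sq, Fintype.card_fin, smul_eq_mul,
      div_mul_cancel₀ _ (NeZero.ne (n : ℝ)), sub_zero]
  have hvr : ‖v‖ ≤ r := by nlinarith [hM.trace_nonneg, norm_nonneg v]
  rcases (hM.trace_nonneg.trans_eq htrM).eq_or_lt with hs | hs
  · have hM0 : M = 0 := hM.trace_eq_zero_iff.1 (htrM.trans hs.symm)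
    have hvr' : ‖v‖ = r := by nlinarith [norm_nonneg v]
    exact subset_convexHull ℝ _ ⟨v, hvr', by rw [hu, hM0, add_zero]⟩
  set m := hM.1.eigenvalues
  set e := hM.1.eigenvectorBasis
  have hMsum : M = ∑ i, m i • vecMulVec (e i) (e i) := by
    simpa using hM.1.eq_sum_eigenvalues_smul_vecMulVec
  have hmsum : ∑ i, m i / (r ^ 2 - ‖v‖ ^ 2) = 1 := by
    rw [← Finset.sum_div, div_eq_one_iff_eq hs.ne', ← htrM, hM.1.trace_eq_sum_eigenvalues]
    simp [m]
  have hcomb : ((v, u) : EuclideanSpace ℝ (Fin n) × Matrix (Fin n) (Fin n) ℝ) =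
      ∑ i, (m i / (r ^ 2 - ‖v‖ ^ 2)) • (v, vecMulVec (fun j => v j) (fun j => v j) -
        (r ^ 2 / n) • 1 + (r ^ 2 - ‖v‖ ^ 2) • vecMulVec (fun j => e i j) (fun j => e i j)) := by
    ext1
    · simp only [Prod.fst_sum, Prod.smul_fst, ← Finset.sum_smul, hmsum, one_smul]
    · simp only [Prod.snd_sum, Prod.smul_snd, smul_add, Finset.sum_add_distrib, ← Finset.sum_smul,
        hmsum, one_smul, smul_smul, div_mul_cancel₀ _ hs.ne']
      rw [hu, ← hMsum]
  rw [hcomb]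
  exact (convex_convexHull ℝ _).sum_mem (fun i _ => div_nonneg (hM.eigenvalues_nonneg i) hs.le)
    hmsum fun i _ => rankOne_mem_convexHull_eulerStates (e.orthonormal.1 i) hvr

theorem convexHull_eulerStates [NeZero n] {r : ℝ} (hr : 0 ≤ r) :
    convexHull ℝ (eulerStates n r) = eulerHull n r :=
  (convexHull_min (eulerStates_subset_eulerHull r) (convex_eulerHull n r)).antisymm
    (eulerHull_subset_convexHull_eulerStates hr)

theorem mem_convexHull_eulerStates_iff [NeZero n] {r : ℝ} (hr : 0 ≤ r)
    {v : EuclideanSpace ℝ (Fin n)} {u : Matrix (Fin n) (Fin n) ℝ} (hu : u.IsSymm)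
    (htr : u.trace = 0) : (v, u) ∈ convexHull ℝ (eulerStates n r) ↔ eFun v u ≤ r ^ 2 / 2 := by
  have hA : (vecMulVec (fun i => v i) (fun i => v i) - u).IsHermitian :=
    (posSemidef_vecMulVec_self_star _).isHermitian.sub (isHermitian_iff_isSymm.2 hu)
  have hn : (0 : ℝ) < n := Nat.cast_pos.2 (Nat.pos_of_neZero n)
  rw [convexHull_eulerStates hr, eulerHull, Set.mem_ofPred_eq, ← lambdaMax_le_iff_posSemidef hA,
    eFun, le_div_iff₀ hn]
  simp only [htr, true_and]
  constructor <;> intro h <;> linarith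

end EulerHull

/-- `√(2 e(v,u))` is the smallest `ρ > 0` with
`(v,u) ∈ (K_ρ)^co`. -/
theorem sqrt_two_eFun_isLeast (n : ℕ) (hn : 2 ≤ n)
    (v : EuclideanSpace ℝ (Fin n)) (u : Matrix (Fin n) (Fin n) ℝ)
    (hsymm : u.IsSymm) (htr : u.trace = 0) (hpos : 0 < eFun v u) :
    IsLeast {ρ : ℝ | 0 < ρ ∧ (v, u) ∈ convexHull ℝ (eulerStates n ρ)}
      (Real.sqrt (2 * eFun v u)) := by
  have : NeZero n := ⟨by omega⟩
  refine ⟨⟨Real.sqrt_pos.2 (by linarith), ?_⟩, fun ρ ⟨hρ, hmem⟩ => ?_⟩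
  · rw [mem_convexHull_eulerStates_iff (Real.sqrt_nonneg _) hsymm htr,
      Real.sq_sqrt (by linarith)]
    linarith
  · rw [mem_convexHull_eulerStates_iff hρ.le hsymm htr] at hmem
    exact Real.sqrt_le_iff.2 ⟨hρ.le, by linarith⟩
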